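/- Let (x_n)_{n∈ℤ} be a strictly increasing sequence in (0,1) with x_n → 1 as n → +∞ and x_n → 0 as n → −∞, and let X = {0, 1} ∪ {x_n : n ∈ ℤ} with the subspace topology from ℝ. Define f_0, f_1 : X → X by f_0(0)=0, f_0(1)=1, f_0(x_n)=x_{n+1} and f_1(0)=0, f_1(1)=1, f_1(x_n)=x_{n−1}. Let σ⁰ ∈ {0,1}^ℕ be the concatenation 0^1 1^2 0^3 1^4 0^5 ⋯ (alternating blocks 0^{2k+1} and 1^{2k+2}). Then for every x ∈ X ∖ {0,1}, the orbit of x along σ⁰, namely {f_{σ⁰_1⋯σ⁰_n}(x) : n ≥ 1}, is dense in X. -/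
import Mathlib


/-- `applyWord F u x` is `f_u(x) = f_{u_n} ∘ ⋯ ∘ f_{u_1} (x)` for the word `u = u_1 ⋯ u_n`. -/
def applyWord {X : Type*} {k : ℕ} (F : Fin k → X → X) : List (Fin k) → X → X
  | [], x => x
  | a :: u, x => applyWord F u (F a x)

lemma applyWord_append {X : Type*} {k : ℕ} (F : Fin k → X → X) (u : List (Fin k))
    (a : Fin k) (z : X) :
    applyWord F (u ++ [a]) z = F a (applyWord F u z) := by
  induction u generalizing z with
  | nil => rfl
  | cons b u ih => simp [applyWord, ih]

/-- Signed displacement after reading `n` letters. -/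
def Dd (σ : ℕ → Fin 2) (n : ℕ) : ℤ :=
  ∑ i ∈ Finset.range n, (if σ i = 0 then (1 : ℤ) else -1)

lemma Dd_succ (σ : ℕ → Fin 2) (n : ℕ) :
    Dd σ (n + 1) = Dd σ n + (if σ n = 0 then (1 : ℤ) else -1) := by
  simp [Dd, Finset.sum_range_succ]

lemma tri_succ (m : ℕ) : (m + 1) * (m + 2) / 2 = m * (m + 1) / 2 + (m + 1) := by
  have h1 : 2 ∣ m * (m + 1) := (Nat.even_mul_succ_self m).two_dvd
  have h2 : (m + 1) * (m + 2) = m * (m + 1) + 2 * (m + 1) := by ring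
  omega

lemma Dd_block (σ : ℕ → Fin 2)
    (hσ : ∀ m n : ℕ, m * (m + 1) / 2 ≤ n → n < (m + 1) * (m + 2) / 2 →
      σ n = if m % 2 = 0 then 0 else 1) :
    ∀ m j : ℕ, j ≤ m + 1 →
      Dd σ (m * (m + 1) / 2 + j)
        = Dd σ (m * (m + 1) / 2) + (if m % 2 = 0 then (j : ℤ) else -(j : ℤ)) := by
  intro m j hj
  induction j with
  | zero => simp
  | succ j ih =>
    have ih' := ih (by omega)
    have hlt : m * (m + 1) / 2 + j < (m + 1) * (m + 2) / 2 := by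
      have := tri_succ m; omega
    have hs := hσ m (m * (m + 1) / 2 + j) (by omega) hlt
    have hDd := Dd_succ σ (m * (m + 1) / 2 + j)
    rw [show m * (m + 1) / 2 + (j + 1) = (m * (m + 1) / 2 + j) + 1 from rfl, hDd, ih', hs]
    by_cases hm : m % 2 = 0 <;> simp [hm] <;> push_cast <;> ring

lemma Dd_tri (σ : ℕ → Fin 2)
    (hσ : ∀ m n : ℕ, m * (m + 1) / 2 ≤ n → n < (m + 1) * (m + 2) / 2 →
      σ n = if m % 2 = 0 then 0 else 1) :
    ∀ m : ℕ, Dd σ (m * (m + 1) / 2)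
      = if m % 2 = 0 then -((m : ℤ) / 2) else (m : ℤ) / 2 + 1 := by
  intro m
  induction m with
  | zero => simp [Dd]
  | succ m ih =>
    have hb := Dd_block σ hσ m (m + 1) le_rfl
    rw [tri_succ m, hb, ih]
    by_cases hm : m % 2 = 0
    · have hm' : (m + 1) % 2 = 1 := by omega
      simp only [hm, if_true, hm', if_neg (by omega : ¬ (1 = 0))]
      push_cast
      omega
    · have hm' : (m + 1) % 2 = 0 := by omega
      simp only [hm, if_false, hm', if_true]
      push_cast
      omega

lemma exists_Dd (σ : ℕ → Fin 2)
    (hσ : ∀ m n : ℕ, m * (m + 1) / 2 ≤ n → n < (m + 1) * (m + 2) / 2 →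
      σ n = if m % 2 = 0 then 0 else 1) (v : ℤ) :
    ∃ n : ℕ, 1 ≤ n ∧ Dd σ n = v := by
  set a : ℕ := v.natAbs + 1 with ha
  set m : ℕ := 2 * a with hm
  have hme : m % 2 = 0 := by omega
  have hmv : (m : ℤ) / 2 = (a : ℤ) := by omega
  have hT := Dd_tri σ hσ m
  rw [hme, if_pos rfl, hmv] at hT
  have hv1 : -(a : ℤ) ≤ v := by omega
  set j : ℕ := (v + a).toNat with hj
  have hjv : (j : ℤ) = v + a := by omega
  have hjle : j ≤ m + 1 := by omega
  have hb := Dd_block σ hσ m j hjle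
  rw [hme, if_pos rfl, hT] at hb
  refine ⟨m * (m + 1) / 2 + j, ?_, by rw [hb]; omega⟩
  have h6 : 2 * 3 ≤ m * (m + 1) := Nat.mul_le_mul (by omega) (by omega)
  omega

/-- On `X = {0,1} ∪ {x_n : n ∈ ℤ}`, with `f₀ : x_n ↦ x_{n+1}` and `f₁ : x_n ↦ x_{n-1}`
(both fixing `0` and `1`), along `σ⁰ = 0¹ 1² 0³ 1⁴ ⋯` every point of `X ∖ {0,1}` has dense
orbit in `X`. -/
theorem stmt16 (x : ℤ → ℝ) (hmono : StrictMono x)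
    (hmem : ∀ n : ℤ, x n ∈ Set.Ioo (0 : ℝ) 1)
    (htop : Filter.Tendsto x Filter.atTop (nhds 1))
    (hbot : Filter.Tendsto x Filter.atBot (nhds 0))
    (X : Set ℝ) (hX : X = {0, 1} ∪ Set.range x)
    (f : Fin 2 → ℝ → ℝ)
    (hf00 : f 0 0 = 0) (hf01 : f 0 1 = 1) (hf0n : ∀ n : ℤ, f 0 (x n) = x (n + 1))
    (hf10 : f 1 0 = 0) (hf11 : f 1 1 = 1) (hf1n : ∀ n : ℤ, f 1 (x n) = x (n - 1))
    (σ : ℕ → Fin 2)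
    (hσ : ∀ m n : ℕ, m * (m + 1) / 2 ≤ n → n < (m + 1) * (m + 2) / 2 →
      σ n = if m % 2 = 0 then 0 else 1) :
    ∀ z ∈ X, z ≠ 0 → z ≠ 1 →
      X ⊆ closure {y : ℝ | ∃ n : ℕ, 1 ≤ n ∧
        applyWord f (List.ofFn fun i : Fin n => σ i) z = y} := by
  intro z hz hz0 hz1
  rw [hX] at hz
  obtain ⟨m, rfl⟩ : ∃ m : ℤ, z = x m := by
    rcases hz with h | h
    · rcases h with h | h
      · exact absurd h hz0
      · exact absurd h hz1
    · obtain ⟨m, hm⟩ := h; exact ⟨m, hm.symm⟩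
  set O : Set ℝ := {y : ℝ | ∃ n : ℕ, 1 ≤ n ∧
      applyWord f (List.ofFn fun i : Fin n => σ i) (x m) = y} with hO
  have horbit : ∀ n : ℕ,
      applyWord f (List.ofFn fun i : Fin n => σ i) (x m) = x (m + Dd σ n) := by
    intro n
    induction n with
    | zero => simp [applyWord, Dd]
    | succ n ih =>
      have hlist : (List.ofFn fun i : Fin (n + 1) => σ i)
          = (List.ofFn fun i : Fin n => σ i) ++ [σ n] := by
        rw [List.ofFn_succ']
        simp [List.concat_eq_append]
      rw [hlist, applyWord_append, ih]
      have h2 : σ n = 0 ∨ σ n = 1 := by omega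
      rcases h2 with h | h
      · rw [h, hf0n, Dd_succ, h]
        simp [add_assoc]
      · rw [h, hf1n, Dd_succ, h]
        norm_num
        ring_nf
  have hrange : Set.range x ⊆ O := by
    rintro _ ⟨j, rfl⟩
    obtain ⟨n, hn1, hDn⟩ := exists_Dd σ hσ (j - m)
    exact ⟨n, hn1, by rw [horbit n, hDn]; ring_nf⟩
  rw [hX]
  rintro y (hy | hy)
  · have hcl : closure (Set.range x) ⊆ closure O := closure_mono hrange
    rcases hy with rfl | rfl
    · exact hcl (mem_closure_of_tendsto hbot
        (Filter.Eventually.of_forall fun n => Set.mem_range_self n))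
    · exact hcl (mem_closure_of_tendsto htop
        (Filter.Eventually.of_forall fun n => Set.mem_range_self n))
  · exact subset_closure (hrange hy)
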